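/- Let G be an n'-right regular bipartite graph, C' an [n',k] MDS code, and C = (G,C') a Tanner code. If S is a k-forcing set for G, then S contains an information set for C; i.e., there exists B ⊆ S with #B = dim C and C^B = F_q^B. -/

import Mathlib

open Finset

def TStep {V1 V2 : Type*} [DecidableEq V1] (N : V2 → Finset V1) (k n' : ℕ)
    (Z Z' : Finset V1) : Prop :=
  ∃ u : V2, k ≤ (N u ∩ Z).card ∧ (N u ∩ Z).card < n' ∧ Z' = Z ∪ N u

def TTerminal {V1 V2 : Type*} [DecidableEq V1] (N : V2 → Finset V1) (k n' : ℕ)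
    (S Z : Finset V1) : Prop :=
  Relation.ReflTransGen (TStep N k n') S Z ∧ ∀ Z', ¬ TStep N k n' Z Z'


/-- `C ≤ F^{V1}` is a Tanner code with component code `C' ≤ F^{N'}` for the bipartite graph
with neighborhoods `N : V2 → Finset V1`: for each constraint vertex `u` there is a code
monomially equivalent to `C'` (encoded by a bijection `e : N(u) ≃ N'` together with nonzero
scalars) containing the projection of `C` onto `N(u)`. -/
def IsTannerCode {V1 V2 N' : Type*} [DecidableEq V1] (F : Type*) [Field F]
    (N : V2 → Finset V1) (C : Submodule F (V1 → F)) (C' : Submodule F (N' → F)) : Prop :=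
  ∀ u : V2, ∃ (e : {v // v ∈ N u} ≃ N') (lam : N' → F), (∀ i, lam i ≠ 0) ∧
    ∀ c ∈ C, (fun i : N' => lam i * c (e.symm i : V1)) ∈ C'

/-- An `[n', k]` MDS code: dimension `k` and every nonzero codeword has weight at least
`n' - k + 1`. -/
def IsMDS {N' : Type*} [Fintype N'] (F : Type*) [Field F] [DecidableEq F]
    (C' : Submodule F (N' → F)) (n' k : ℕ) : Prop :=
  Fintype.card N' = n' ∧ Module.finrank F C' = k ∧
    ∀ x ∈ C', x ≠ 0 → n' - k + 1 ≤ (Finset.univ.filter fun i => x i ≠ 0).card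

/-!
Along a forcing sequence, a codeword of `C` vanishing on `S` keeps vanishing: once it vanishes
on `k` points of a neighbourhood `N(u)`, its (rescaled) restriction to `N(u)` is a codeword of
the MDS code `C'` with at least `k` zeros, hence zero. So the projection of `C` onto `S` is
injective, and a minimal subset `B ⊆ S` on which it is still injective is an information set:
dropping any `b ∈ B` leaves a codeword supported at `b` within `B`, so the projection onto `B`
hits every unit vector.
-/

section InformationSet

variable {ι F : Type*} [Field F]

def IsDeterminingSet (W : Submodule F (ι → F)) (B : Finset ι) : Prop :=
  ∀ c ∈ W, (∀ v ∈ B, c v = 0) → c = 0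

variable {W : Submodule F (ι → F)}

lemma IsDeterminingSet.exists_minimal [DecidableEq ι] {S : Finset ι}
    (hS : IsDeterminingSet W S) :
    ∃ B ⊆ S, IsDeterminingSet W B ∧ ∀ b ∈ B, ¬ IsDeterminingSet W (B.erase b) := by
  classical
  obtain ⟨B, hBmin⟩ := Finset.exists_minimal (s := S.powerset.filter (IsDeterminingSet W))
    ⟨S, by simpa using hS⟩
  obtain ⟨hBS, hB⟩ := by simpa using hBmin.prop
  refine ⟨B, hBS, hB, fun b hb hBb => ?_⟩
  have hBBb : B ⊆ B.erase b :=
    hBmin.le_of_le (by simpa using ⟨(erase_subset b B).trans hBS, hBb⟩) (erase_subset b B)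
  exact notMem_erase b B (hBBb hb)

lemma IsDeterminingSet.exists_mem_funLeft_eq_single [DecidableEq ι] {B : Finset ι} {b : ι}
    (hB : IsDeterminingSet W B) (hb : b ∈ B) (hBb : ¬ IsDeterminingSet W (B.erase b)) :
    ∃ c ∈ W, LinearMap.funLeft F F ((↑) : B → ι) c = Pi.single ⟨b, hb⟩ 1 := by
  obtain ⟨c, hcW, hc_erase, hc_ne⟩ : ∃ c ∈ W, (∀ v ∈ B.erase b, c v = 0) ∧ c ≠ 0 := by
    simpa [IsDeterminingSet] using hBb
  have hcb : c b ≠ 0 := fun hcb =>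
    hc_ne <| hB c hcW fun v hv =>
      if hvb : v = b then hvb ▸ hcb else hc_erase v (mem_erase.2 ⟨hvb, hv⟩)
  refine ⟨(c b)⁻¹ • c, W.smul_mem _ hcW, funext fun ⟨v, hv⟩ => ?_⟩
  by_cases hvb : v = b
  · subst hvb
    simp [LinearMap.funLeft_apply, inv_mul_cancel₀ hcb]
  · simp [LinearMap.funLeft_apply, hc_erase v (mem_erase.2 ⟨hvb, hv⟩), hvb]

lemma IsDeterminingSet.map_funLeft_eq_top [DecidableEq ι] {B : Finset ι}
    (hB : IsDeterminingSet W B) (hmin : ∀ b ∈ B, ¬ IsDeterminingSet W (B.erase b)) :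
    W.map (LinearMap.funLeft F F ((↑) : B → ι)) = ⊤ := by
  classical
  rw [eq_top_iff, ← (Pi.basisFun F B).span_eq, Submodule.span_le]
  rintro _ ⟨⟨b, hb⟩, rfl⟩
  obtain ⟨c, hcW, hc⟩ := hB.exists_mem_funLeft_eq_single hb (hmin b hb)
  exact ⟨c, hcW, by rw [hc, Pi.basisFun_apply]⟩

lemma IsDeterminingSet.finrank_eq_card {B : Finset ι} (hB : IsDeterminingSet W B)
    (htop : W.map (LinearMap.funLeft F F ((↑) : B → ι)) = ⊤) :
    Module.finrank F W = B.card := by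
  set L := (LinearMap.funLeft F F ((↑) : B → ι)).domRestrict W
  have hL : Function.Injective L := by
    rw [← LinearMap.ker_eq_bot, Submodule.eq_bot_iff]
    rintro ⟨c, hcW⟩ hc
    exact Subtype.ext <| hB c hcW fun v hv => congrFun (LinearMap.mem_ker.1 hc) ⟨v, hv⟩
  rw [← LinearMap.finrank_range_of_inj hL, LinearMap.range_domRestrict, htop, finrank_top,
    Module.finrank_pi, Fintype.card_coe]

theorem IsDeterminingSet.exists_information_set [DecidableEq ι] {S : Finset ι}
    (hS : IsDeterminingSet W S) :
    ∃ B ⊆ S, B.card = Module.finrank F W ∧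
      W.map (LinearMap.funLeft F F ((↑) : B → ι)) = ⊤ := by
  obtain ⟨B, hBS, hB, hmin⟩ := hS.exists_minimal
  have htop := hB.map_funLeft_eq_top hmin
  exact ⟨B, hBS, (hB.finrank_eq_card htop).symm, htop⟩

end InformationSet

section TannerCode

variable {V1 V2 N' F : Type*} [DecidableEq V1] [Fintype N'] [Field F] [DecidableEq F]
  {N : V2 → Finset V1} {n' k : ℕ} {C' : Submodule F (N' → F)} {C : Submodule F (V1 → F)}

lemma IsMDS.eq_zero_of_le_card_zeros (hMDS : IsMDS F C' n' k) {x : N' → F} (hx : x ∈ C')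
    (hzeros : k ≤ #{i | x i = 0}) : x = 0 := by
  by_contra hne
  have hweight := hMDS.2.2 x hx hne
  have hsplit := card_filter_add_card_filter_not (s := univ) fun i => x i = 0
  rw [card_univ, hMDS.1] at hsplit
  simp only [ne_eq] at hweight
  omega

lemma IsTannerCode.eqOn_zero_of_le_card_zeros (hTan : IsTannerCode F N C C')
    (hMDS : IsMDS F C' n' k) {c : V1 → F} (hc : c ∈ C) (u : V2)
    (hzeros : k ≤ #{v ∈ N u | c v = 0}) : ∀ v ∈ N u, c v = 0 := by
  obtain ⟨e, lam, hlam, hC'⟩ := hTan u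
  set x : N' → F := fun i => lam i * c (e.symm i : V1)
  have hx_apply (v : V1) (hv : v ∈ N u) : x (e ⟨v, hv⟩) = lam (e ⟨v, hv⟩) * c v := by
    simp [x]
  have hx : x = 0 := by
    refine hMDS.eq_zero_of_le_card_zeros (hC' c hc) (hzeros.trans ?_)
    refine card_le_card_of_surjOn (fun i => (e.symm i : V1)) fun v hv => ?_
    obtain ⟨hvN, hcv⟩ := mem_filter.1 hv
    exact ⟨e ⟨v, hvN⟩, by simp [hx_apply, hcv], by simp⟩
  intro v hv
  have := hx_apply v hv
  rw [hx, Pi.zero_apply, eq_comm, mul_eq_zero] at this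
  exact this.resolve_left (hlam _)

lemma IsTannerCode.eqOn_zero_of_reflTransGen (hTan : IsTannerCode F N C C')
    (hMDS : IsMDS F C' n' k) {c : V1 → F} (hc : c ∈ C) {S Z : Finset V1}
    (hS : ∀ v ∈ S, c v = 0) (hSZ : Relation.ReflTransGen (TStep N k n') S Z) :
    ∀ v ∈ Z, c v = 0 := by
  induction hSZ with
  | refl => exact hS
  | @tail Z _ _ hstep ih =>
    obtain ⟨u, hcard, -, rfl⟩ := hstep
    have hN := hTan.eqOn_zero_of_le_card_zeros hMDS hc u <| hcard.trans <| card_le_card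
      fun v hv => mem_filter.2 ⟨(mem_inter.1 hv).1, ih v (mem_inter.1 hv).2⟩
    intro v hv
    exact (mem_union.1 hv).elim (ih v) (hN v)

lemma isDeterminingSet_of_reflTransGen_univ [Fintype V1] (hTan : IsTannerCode F N C C')
    (hMDS : IsMDS F C' n' k) {S : Finset V1}
    (hS : Relation.ReflTransGen (TStep N k n') S univ) : IsDeterminingSet C S :=
  fun _ hc hcS => funext fun v => hTan.eqOn_zero_of_reflTransGen hMDS hc hcS hS v (mem_univ v)

end TannerCode

theorem forcing_contains_information_set_general {V1 V2 N' : Type*} [Fintype V1] [DecidableEq V1]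
    [Fintype N'] (F : Type*) [Field F] [DecidableEq F]
    (N : V2 → Finset V1) (n' k : ℕ)
    (C' : Submodule F (N' → F)) (hMDS : IsMDS F C' n' k)
    (C : Submodule F (V1 → F)) (hTan : IsTannerCode F N C C')
    (S : Finset V1) (hforce : TTerminal N k n' S Finset.univ) :
    ∃ B : Finset V1, B ⊆ S ∧ B.card = Module.finrank F C ∧
      C.map (LinearMap.funLeft F F (fun v : {v // v ∈ B} => (v : V1))) = ⊤ :=
  (isDeterminingSet_of_reflTransGen_univ hTan hMDS hforce.1).exists_information_set

/-- for a Tanner code `C = (G,C')` with `C'` an `[n',k]` MDS code, a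
`k`-forcing set `S` contains an information set for `C`: some `B ⊆ S` with `#B = dim C`
such that the projection of `C` onto `B` is all of `F^B`. -/
theorem forcing_contains_information_set {V1 V2 N' : Type*} [Fintype V1] [DecidableEq V1]
    [Fintype V2] [Fintype N'] (F : Type*) [Field F] [Fintype F] [DecidableEq F]
    (N : V2 → Finset V1) (n' k : ℕ) (hreg : ∀ u : V2, (N u).card = n') (hk : k ≤ n')
    (C' : Submodule F (N' → F)) (hMDS : IsMDS F C' n' k)
    (C : Submodule F (V1 → F)) (hTan : IsTannerCode F N C C')
    (S : Finset V1) (hforce : TTerminal N k n' S Finset.univ) :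
    ∃ B : Finset V1, B ⊆ S ∧ B.card = Module.finrank F C ∧
      C.map (LinearMap.funLeft F F (fun v : {v // v ∈ B} => (v : V1))) = ⊤ :=
  forcing_contains_information_set_general F N n' k C' hMDS C hTan S hforce
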